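/- Each coordinate function x_i of the n-dimensional Peano curve is self-affine with scale parameter H = 1/n to base r = 3^n: for all integers k ≥ 1, 0 ≤ s ≤ r^k − 1, and all real h with 0 ≤ h < r^{−k}, one has x_i(s r^{−k} + h) − x_i(s r^{−k}) = ε(k,s) r^{−k/n} x_i(r^k h) for some sign ε(k,s) ∈ {−1, 1}. -/

import Mathlib

open scoped BigOperators ENNReal

/-- `Φ` : evaluation of a ternary digit sequence (digits at indices `1,2,3,…`). -/
noncomputable def Phi (t : ℕ → ℕ) : ℝ := ∑' k : ℕ, (t (k + 1) : ℝ) / 3 ^ (k + 1)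

/-- A sequence of ternary digits (elements of `D = {0,1,2}`). -/
def IsDigitSeq (t : ℕ → ℕ) : Prop := ∀ k, t k ≤ 2

/-- `S_{i+jn}(𝐭) = ∑_{k=1}^{i+jn} t_k − ∑_{s=0}^{j} t_{i+sn}`. -/
def S (n i j : ℕ) (t : ℕ → ℕ) : ℤ :=
  (∑ k ∈ Finset.Icc 1 (i + j * n), (t k : ℤ)) -
    ∑ s ∈ Finset.range (j + 1), (t (i + s * n) : ℤ)

/-- The operator `ξ(a) = 2 − a`, as a permutation of `ℝ` (so that integer powers
`ξ^m`, `m : ℤ`, make sense). -/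
def xiPerm : Equiv.Perm ℝ :=
  ⟨fun a => 2 - a, fun a => 2 - a, fun a => by dsimp; ring, fun a => by dsimp; ring⟩

/-- `x_i(𝐭) = ∑_{j=0}^∞ ξ^{S_{i+jn}(𝐭)}(t_{i+jn}) / 3^{j+1}`. -/
noncomputable def xcoord (n i : ℕ) (t : ℕ → ℕ) : ℝ :=
  ∑' j : ℕ, ((xiPerm ^ (S n i j t)) ((t (i + j * n) : ℝ))) / 3 ^ (j + 1)

/-- The canonical ternary digit expansion of `t ∈ [0,1]` (all digits `2` for `t = 1`). -/
noncomputable def ternaryDigit (t : ℝ) (k : ℕ) : ℕ :=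
  if t = 1 then 2 else (⌊t * 3 ^ k⌋).toNat % 3

/-- The `i`-th coordinate function of the `n`-dimensional Peano curve, as a function
on `[0,1]` (via the canonical ternary representation; by well-definedness this agrees
with `xcoord` on any ternary representation). -/
noncomputable def peanoCoord (n i : ℕ) (t : ℝ) : ℝ := xcoord n i (ternaryDigit t)

/-
A point of `[s r^{-k}, (s+1) r^{-k})`, `r = 3^n`, is `(s + u) / 3^{nk}` with `u ∈ [0,1)`: its
ternary digits are the `nk` digits of `s` followed by those of `u`, while `s r^{-k}` has the digits
of `s` followed by zeros. The `j`-th summand of `x_i` reads the digit `i + jn`, so the first `k`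
summands agree for the two points, and for `j ≥ k` the exponent `S_{i+jn}` splits as
`C + S_{i+(j-k)n}(u)` with `C` depending on `s` only. As `ξ^C a - ξ^C 0 = (-1)^C a`, the two
tails differ by `(-1)^C 3^{-k} x_i(u)`, and `3^{-k} = r^{-k/n}`.
-/

open Finset

theorem tsum_sub_tsum_eq_mul_tsum_of_tail {f g φ : ℕ → ℝ} {k : ℕ} {c : ℝ}
    (hf : Summable f) (hg : Summable g) (hpre : ∀ j < k, f j = g j)
    (htail : ∀ j, f (j + k) - g (j + k) = c * φ j) :
    ∑' j, f j - ∑' j, g j = c * ∑' j, φ j := by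
  rw [← hf.sum_add_tsum_nat_add k, ← hg.sum_add_tsum_nat_add k,
    sum_congr rfl fun j hj => hpre j (mem_range.1 hj), add_sub_add_left_eq_sub,
    ← ((summable_nat_add_iff k).2 hf).tsum_sub ((summable_nat_add_iff k).2 hg)]
  simp_rw [htail, tsum_mul_left]

theorem xiPerm_apply (a : ℝ) : xiPerm a = 2 - a := rfl

theorem xiPerm_sq : xiPerm ^ 2 = 1 :=
  Equiv.ext fun a => by simp [sq, xiPerm_apply]

theorem xiPerm_zpow_apply (m : ℤ) (a : ℝ) :
    (xiPerm ^ m) a = if Even m then a else 2 - a := by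
  obtain ⟨q, rfl | rfl⟩ := Int.even_or_odd' m
  · simp [zpow_mul, xiPerm_sq]
  · simp [zpow_add_one, zpow_mul, xiPerm_sq, xiPerm_apply]

theorem xiPerm_zpow_apply_sub_apply_zero (m : ℤ) (a : ℝ) :
    (xiPerm ^ m) a - (xiPerm ^ m) 0 = (-1) ^ m * a := by
  rw [xiPerm_zpow_apply, xiPerm_zpow_apply, neg_one_zpow_eq_ite]
  split_ifs <;> ring

theorem abs_xiPerm_zpow_apply_le (m : ℤ) {a : ℝ} (h0 : 0 ≤ a) (h2 : a ≤ 2) :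
    |(xiPerm ^ m) a| ≤ 2 := by
  rw [xiPerm_zpow_apply, abs_le]
  split_ifs <;> constructor <;> linarith

theorem S_eq_sum_range (n i j : ℕ) (t : ℕ → ℕ) :
    S n i j t = ∑ m ∈ range (i + j * n), (t (m + 1) : ℤ) -
      ∑ s ∈ range (j + 1), (t (i + s * n) : ℤ) := by
  rw [S, ← Ico_add_one_right_eq_Icc, sum_Ico_eq_sum_range]
  simp [add_comm]

theorem S_congr {n i j : ℕ} {t t' : ℕ → ℕ} (h : ∀ m ≤ i + j * n, t m = t' m) :
    S n i j t = S n i j t' := by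
  rw [S_eq_sum_range, S_eq_sum_range]
  congr 1
  · exact sum_congr rfl fun m hm => by rw [h _ (mem_range.1 hm)]
  · refine sum_congr rfl fun s hs => ?_
    have : s * n ≤ j * n := Nat.mul_le_mul_right n (Nat.lt_succ_iff.1 (mem_range.1 hs))
    rw [h _ (by omega)]

noncomputable def peanoTerm (n i : ℕ) (t : ℕ → ℕ) (j : ℕ) : ℝ :=
  (xiPerm ^ S n i j t) (t (i + j * n) : ℝ) / 3 ^ (j + 1)

theorem summable_peanoTerm (n i : ℕ) {t : ℕ → ℕ} (ht : IsDigitSeq t) :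
    Summable (peanoTerm n i t) := by
  have hgeom : Summable fun j : ℕ => 2 / 3 * (1 / 3 : ℝ) ^ j :=
    (summable_geometric_of_lt_one (by norm_num) (by norm_num)).mul_left _
  refine hgeom.of_norm_bounded fun j => ?_
  have hd : |(xiPerm ^ S n i j t) (t (i + j * n) : ℝ)| ≤ 2 :=
    abs_xiPerm_zpow_apply_le _ (Nat.cast_nonneg _) (by exact_mod_cast ht _)
  rw [Real.norm_eq_abs, peanoTerm, abs_div, abs_of_pos (by positivity : (0 : ℝ) < 3 ^ (j + 1))]
  calc |(xiPerm ^ S n i j t) (t (i + j * n) : ℝ)| / 3 ^ (j + 1) ≤ 2 / 3 ^ (j + 1) := by gcongr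
    _ = 2 / 3 * (1 / 3) ^ j := by rw [one_div_pow, pow_succ]; ring

theorem peanoTerm_congr {n i j : ℕ} {t t' : ℕ → ℕ} (h : ∀ m ≤ i + j * n, t m = t' m) :
    peanoTerm n i t j = peanoTerm n i t' j := by
  rw [peanoTerm, peanoTerm, S_congr h, h _ le_rfl]

def prefixExponent (n i k : ℕ) (t : ℕ → ℕ) : ℤ :=
  ∑ m ∈ range (n * k), (t (m + 1) : ℤ) - ∑ s ∈ range k, (t (i + s * n) : ℤ)

section Shift

variable {n i k : ℕ} {D d₀ e : ℕ → ℕ}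

theorem S_add_eq_prefixExponent_add (hi1 : 1 ≤ i) (hin : i ≤ n)
    (hle : ∀ m ≤ n * k, D m = d₀ m) (hgt : ∀ m, n * k < m → D m = e (m - n * k))
    (j : ℕ) :
    S n i (j + k) D = prefixExponent n i k d₀ + S n i j e := by
  rw [S_eq_sum_range, S_eq_sum_range, prefixExponent,
    show i + (j + k) * n = n * k + (i + j * n) by ring,
    show j + k + 1 = k + (j + 1) by ring, sum_range_add _ (n * k), sum_range_add _ k]
  have h₁ : ∑ m ∈ range (n * k), (D (m + 1) : ℤ) =
      ∑ m ∈ range (n * k), (d₀ (m + 1) : ℤ) :=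
    sum_congr rfl fun m hm => by rw [hle _ (mem_range.1 hm)]
  have h₂ : ∑ m ∈ range (i + j * n), (D (n * k + m + 1) : ℤ) =
      ∑ m ∈ range (i + j * n), (e (m + 1) : ℤ) :=
    sum_congr rfl fun m _ => by rw [hgt _ (by omega), show n * k + m + 1 - n * k = m + 1 by omega]
  have h₃ : ∑ s ∈ range k, (D (i + s * n) : ℤ) =
      ∑ s ∈ range k, (d₀ (i + s * n) : ℤ) :=
    sum_congr rfl fun s hs => by
      have := mem_range.1 hs
      rw [hle _ (by nlinarith)]
  have h₄ : ∑ s ∈ range (j + 1), (D (i + (k + s) * n) : ℤ) =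
      ∑ s ∈ range (j + 1), (e (i + s * n) : ℤ) :=
    sum_congr rfl fun s _ => by
      rw [hgt _ (by nlinarith), show i + (k + s) * n - n * k = i + s * n by
        rw [add_mul, mul_comm k n]; omega]
  rw [h₁, h₂, h₃, h₄]
  ring

theorem peanoTerm_add_sub_peanoTerm_add (hi1 : 1 ≤ i) (hin : i ≤ n)
    (hle : ∀ m ≤ n * k, D m = d₀ m) (hgt : ∀ m, n * k < m → D m = e (m - n * k))
    (hzero : ∀ m, n * k < m → d₀ m = 0) (j : ℕ) :
    peanoTerm n i D (j + k) - peanoTerm n i d₀ (j + k) =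
      (-1) ^ prefixExponent n i k d₀ * (3 ^ k)⁻¹ * peanoTerm n i e j := by
  have hidx : n * k < i + (j + k) * n := by nlinarith
  have hS_D := S_add_eq_prefixExponent_add hi1 hin hle hgt j
  have hS_d₀ : S n i (j + k) d₀ = prefixExponent n i k d₀ := by
    rw [S_add_eq_prefixExponent_add hi1 hin (fun _ _ => rfl) (e := fun _ => 0) hzero j]
    simp [S]
  rw [peanoTerm, peanoTerm, peanoTerm, hS_D, hS_d₀, hgt _ hidx, hzero _ hidx,
    show i + (j + k) * n - n * k = i + j * n by rw [add_mul, mul_comm k n]; omega,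
    zpow_add, Equiv.Perm.mul_apply, Nat.cast_zero, ← sub_div, xiPerm_zpow_apply_sub_apply_zero,
    show j + k + 1 = k + (j + 1) by ring, pow_add]
  field_simp

theorem xcoord_sub_xcoord_of_shift (hi1 : 1 ≤ i) (hin : i ≤ n)
    (hD : IsDigitSeq D) (hd₀ : IsDigitSeq d₀)
    (hle : ∀ m ≤ n * k, D m = d₀ m) (hgt : ∀ m, n * k < m → D m = e (m - n * k))
    (hzero : ∀ m, n * k < m → d₀ m = 0) :
    xcoord n i D - xcoord n i d₀ =
      (-1) ^ prefixExponent n i k d₀ * (3 ^ k)⁻¹ * xcoord n i e :=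
  tsum_sub_tsum_eq_mul_tsum_of_tail (summable_peanoTerm n i hD) (summable_peanoTerm n i hd₀)
    (fun j hj => peanoTerm_congr fun m hm => hle m (by nlinarith))
    (peanoTerm_add_sub_peanoTerm_add hi1 hin hle hgt hzero)

end Shift

theorem isDigitSeq_ternaryDigit (x : ℝ) : IsDigitSeq (ternaryDigit x) := fun k => by
  unfold ternaryDigit
  split_ifs <;> omega

theorem ternaryDigit_of_ne_one {x : ℝ} (hx : x ≠ 1) (k : ℕ) :
    ternaryDigit x k = ⌊x * 3 ^ k⌋₊ % 3 := by
  rw [ternaryDigit, if_neg hx, Int.floor_toNat]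

theorem ternaryDigit_zero (k : ℕ) : ternaryDigit 0 k = 0 := by
  simp [ternaryDigit_of_ne_one zero_ne_one]

section Floor

variable {b N m s : ℕ} {u : ℝ}

theorem floor_add_div_pow_mul_pow_of_le (hb : 0 < b) (hm : m ≤ N) (hu0 : 0 ≤ u) (hu1 : u < 1) :
    ⌊(s + u) / b ^ N * b ^ m⌋₊ = s / b ^ (N - m) := by
  obtain ⟨d, rfl⟩ := Nat.exists_eq_add_of_le hm
  have hbm : ((b : ℝ) ^ m) ≠ 0 := by positivity
  have hx : (s + u) / b ^ (m + d) * b ^ m = (s + u) / ((b ^ d : ℕ) : ℝ) := by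
    push_cast
    field_simp
    ring
  rw [hx, Nat.floor_div_natCast, add_comm, Nat.floor_add_natCast hu0, Nat.floor_eq_zero.2 hu1,
    zero_add, Nat.add_sub_cancel_left]

theorem floor_add_div_pow_mul_pow_of_lt (hb : 0 < b) (hm : N < m) (hu0 : 0 ≤ u) :
    ⌊(s + u) / b ^ N * b ^ m⌋₊ = ⌊u * b ^ (m - N)⌋₊ + s * b ^ (m - N) := by
  obtain ⟨d, rfl⟩ := Nat.exists_eq_add_of_le hm.le
  have hbN : ((b : ℝ) ^ N) ≠ 0 := by positivity
  have hx : (s + u) / b ^ N * b ^ (N + d) = u * b ^ d + ((s * b ^ d : ℕ) : ℝ) := by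
    push_cast
    field_simp
    ring
  rw [hx, Nat.floor_add_natCast (by positivity), Nat.add_sub_cancel_left]

end Floor

section Prefix

variable {N m s : ℕ} {u : ℝ}

theorem add_div_pow_lt_one (hs : s < 3 ^ N) (hu1 : u < 1) : (s + u) / 3 ^ N < 1 := by
  rw [div_lt_one (by positivity)]
  have : (s : ℝ) + 1 ≤ 3 ^ N := by exact_mod_cast hs
  linarith

theorem ternaryDigit_add_div_pow_of_le (hm : m ≤ N) (hs : s < 3 ^ N) (hu0 : 0 ≤ u)
    (hu1 : u < 1) :
    ternaryDigit ((s + u) / 3 ^ N) m = s / 3 ^ (N - m) % 3 := by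
  rw [ternaryDigit_of_ne_one (add_div_pow_lt_one hs hu1).ne,
    ← Nat.cast_ofNat, floor_add_div_pow_mul_pow_of_le (by norm_num) hm hu0 hu1]

theorem ternaryDigit_add_div_pow_of_lt (hm : N < m) (hs : s < 3 ^ N) (hu0 : 0 ≤ u)
    (hu1 : u < 1) :
    ternaryDigit ((s + u) / 3 ^ N) m = ternaryDigit u (m - N) := by
  rw [ternaryDigit_of_ne_one (add_div_pow_lt_one hs hu1).ne, ternaryDigit_of_ne_one hu1.ne,
    ← Nat.cast_ofNat, floor_add_div_pow_mul_pow_of_lt (by norm_num) hm hu0]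
  obtain ⟨c, hc⟩ : 3 ∣ s * 3 ^ (m - N) := dvd_mul_of_dvd_right (dvd_pow_self 3 (by omega)) s
  omega

end Prefix

theorem peanoCoord_add_div_sub_peanoCoord_div {n i k s : ℕ} (hi1 : 1 ≤ i) (hin : i ≤ n)
    (hs : s < 3 ^ (n * k)) {u : ℝ} (hu0 : 0 ≤ u) (hu1 : u < 1) :
    ∃ ε : ℝ, (ε = 1 ∨ ε = -1) ∧
      peanoCoord n i ((s + u) / 3 ^ (n * k)) - peanoCoord n i (s / 3 ^ (n * k)) =
        ε * (3 ^ k)⁻¹ * peanoCoord n i u := by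
  have hs₀ : (s : ℝ) / 3 ^ (n * k) = (s + 0) / 3 ^ (n * k) := by rw [add_zero]
  refine ⟨_, (abs_eq zero_le_one).1 (abs_neg_one_zpow _),
    xcoord_sub_xcoord_of_shift hi1 hin (isDigitSeq_ternaryDigit _) (isDigitSeq_ternaryDigit _)
      (fun m hm => ?_) (fun m hm => ternaryDigit_add_div_pow_of_lt hm hs hu0 hu1)
      (fun m hm => ?_)⟩
  · rw [hs₀, ternaryDigit_add_div_pow_of_le hm hs hu0 hu1,
      ternaryDigit_add_div_pow_of_le hm hs le_rfl zero_lt_one]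
  · rw [hs₀, ternaryDigit_add_div_pow_of_lt hm hs le_rfl zero_lt_one, ternaryDigit_zero]

theorem pow_rpow_neg_div_self {a : ℝ} (ha : 0 ≤ a) {n : ℕ} (hn : n ≠ 0) (k : ℕ) :
    (a ^ n) ^ (-((k : ℝ) / n)) = (a ^ k)⁻¹ := by
  rw [← Real.rpow_natCast a n, ← Real.rpow_mul ha, mul_neg,
    mul_div_cancel₀ _ (by exact_mod_cast hn), Real.rpow_neg ha, Real.rpow_natCast]

theorem peanoCoord_self_affine_general (n i : ℕ) (hi1 : 1 ≤ i) (hin : i ≤ n) :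
    ∀ k : ℕ, 1 ≤ k → ∀ s : ℕ, s ≤ (3 ^ n) ^ k - 1 →
      ∀ h : ℝ, 0 ≤ h → h < (((3 : ℝ) ^ n) ^ k)⁻¹ →
        ∃ ε : ℝ, (ε = 1 ∨ ε = -1) ∧
          peanoCoord n i ((s : ℝ) * (((3 : ℝ) ^ n) ^ k)⁻¹ + h) -
              peanoCoord n i ((s : ℝ) * (((3 : ℝ) ^ n) ^ k)⁻¹) =
            ε * ((3 : ℝ) ^ n) ^ (-((k : ℝ) / (n : ℝ))) *
              peanoCoord n i (((3 : ℝ) ^ n) ^ k * h) := by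
  intro k _ s hs h hh0 hh1
  rw [← pow_mul] at hs hh1 ⊢
  have hr : (0 : ℝ) < 3 ^ (n * k) := by positivity
  have hsN : s < 3 ^ (n * k) := by have := Nat.one_le_pow (n * k) 3 (by norm_num); omega
  have hu1 : 3 ^ (n * k) * h < 1 := (lt_inv_mul_iff₀ hr).1 (by rwa [mul_one])
  obtain ⟨ε, hε, hdiff⟩ :=
    peanoCoord_add_div_sub_peanoCoord_div hi1 hin hsN (by positivity) hu1
  refine ⟨ε, hε, ?_⟩
  rw [pow_mul, pow_rpow_neg_div_self (by norm_num) (by omega), ← pow_mul, ← hdiff,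
    ← div_eq_mul_inv, div_add' _ _ _ hr.ne', mul_comm h]

/-- each `x_i` is self-affine with scale parameter `H = 1/n` to base
`r = 3^n`. -/
theorem peanoCoord_self_affine (n i : ℕ) (hn : 2 ≤ n) (hi1 : 1 ≤ i) (hin : i ≤ n) :
    ∀ k : ℕ, 1 ≤ k → ∀ s : ℕ, s ≤ (3 ^ n) ^ k - 1 →
      ∀ h : ℝ, 0 ≤ h → h < (((3 : ℝ) ^ n) ^ k)⁻¹ →
        ∃ ε : ℝ, (ε = 1 ∨ ε = -1) ∧
          peanoCoord n i ((s : ℝ) * (((3 : ℝ) ^ n) ^ k)⁻¹ + h) -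
              peanoCoord n i ((s : ℝ) * (((3 : ℝ) ^ n) ^ k)⁻¹) =
            ε * ((3 : ℝ) ^ n) ^ (-((k : ℝ) / (n : ℝ))) *
              peanoCoord n i (((3 : ℝ) ^ n) ^ k * h) :=
  peanoCoord_self_affine_general n i hi1 hin
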